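/- The elements Q^{2k−1}_l (l = 1,...,n, k ≥ 1) and Q^{2k}_{ij} (1 ≤ i < j ≤ n, k ≥ 1) are linearly independent over C in so(n,1) ⊗ Q. -/

import Mathlib

open MvPolynomial Matrix

noncomputable section

/-- The ideal generated by the polynomials `λᵢ² − λⱼ² + rᵢ − rⱼ`. -/
def LLIdeal (n : ℕ) (r : Fin n → ℂ) : Ideal (MvPolynomial (Fin n) ℂ) :=
  Ideal.span {p | ∃ i j : Fin n, p = X i ^ 2 - X j ^ 2 + C (r i) - C (r j)}

/-- The algebra `Q` of polynomial functions on the curve. -/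
abbrev LLQ (n : ℕ) (r : Fin n → ℂ) : Type := MvPolynomial (Fin n) ℂ ⧸ LLIdeal n r

/-- `λ̄ᵢ`, the image of `λᵢ` in `Q`. -/
def lamQ (n : ℕ) (r : Fin n → ℂ) (i : Fin n) : LLQ n r :=
  Ideal.Quotient.mk _ (X i)

/-- `λ̄ = λ̄ᵢ² + rᵢ` (independent of `i`). -/
def lambar (n : ℕ) (r : Fin n → ℂ) [NeZero n] : LLQ n r :=
  lamQ n r 0 ^ 2 + algebraMap ℂ _ (r 0)

/-- Matrices of size `n+1` over `Q`; contains `so(n,1) ⊗ Q` with its commutator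
Lie bracket. -/
abbrev LLM (n : ℕ) (r : Fin n → ℂ) : Type := Matrix (Fin (n+1)) (Fin (n+1)) (LLQ n r)

/-- `Q_i = (E_{i,n+1} + E_{n+1,i}) ⊗ λ̄ᵢ`. -/
def Qgen (n : ℕ) (r : Fin n → ℂ) (i : Fin n) : LLM n r :=
  lamQ n r i • (single i.castSucc (Fin.last n) 1 + single (Fin.last n) i.castSucc 1)

/-- `Q^{2k-1}_l = (E_{l,n+1} + E_{n+1,l}) ⊗ λ̄^{k-1} λ̄_l`. -/
def Qodd (n : ℕ) (r : Fin n → ℂ) [NeZero n] (k : ℕ) (l : Fin n) : LLM n r :=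
  (lambar n r ^ (k-1) * lamQ n r l) •
    (single l.castSucc (Fin.last n) 1 + single (Fin.last n) l.castSucc 1)

/-- `Q^{2k}_{ij} = (E_{i,j} − E_{j,i}) ⊗ λ̄^{k-1} λ̄ᵢ λ̄ⱼ`. -/
def Qeven (n : ℕ) (r : Fin n → ℂ) [NeZero n] (k : ℕ) (i j : Fin n) : LLM n r :=
  (lambar n r ^ (k-1) * lamQ n r i * lamQ n r j) •
    (single i.castSucc j.castSucc 1 - single j.castSucc i.castSucc 1)

end

/-!
For every `μ ∈ ℂ`, choosing square roots `λᵢ = √(μ - rᵢ)` gives a point of the curve, hence a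
character of `Q` sending `λ̄` to `μ` and `λ̄ᵢ` to a value that vanishes only at `μ = rᵢ`. So if
`∑ₖ cₖ λ̄ᵏ q = 0` with `q` one of `λ̄ₗ`, `λ̄ᵢλ̄ⱼ`, the polynomial `∑ₖ cₖ Xᵏ` has all but finitely many
`μ` as roots and vanishes. Each family `Q^{2k-1}_l` (resp. `Q^{2k}_{ij}`, `i < j`) is the only one
with a nonzero `(l, n+1)` (resp. `(i, j)`) entry, and there it is `λ̄^{k-1}` times a fixed `q`.
-/

section PowMul

variable {K A : Type*} [Field K] [Infinite K] [CommRing A] [Algebra K A]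

theorem linearIndependent_pow_mul_of_eval (a q : A) (φ : K → A →ₐ[K] K)
    (hφa : ∀ μ, φ μ a = μ) (hq : {μ | φ μ q = 0}.Finite) :
    LinearIndependent K (fun k : ℕ => a ^ k * q) := by
  let f : Polynomial K →ₗ[K] A := LinearMap.mulRight K q ∘ₗ (Polynomial.aeval a).toLinearMap
  have hf : LinearMap.ker f = ⊥ := by
    refine LinearMap.ker_eq_bot'.mpr fun p hp => p.eq_zero_of_infinite_isRoot ?_
    refine hq.infinite_compl.mono fun μ hμ => ?_
    have hφ : ∀ x, φ μ (Polynomial.aeval a x) = x.eval μ := fun x => by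
      rw [← Polynomial.aeval_algHom_apply, hφa, Polynomial.coe_aeval_eq_eval]
    have := congrArg (φ μ) hp
    rw [LinearMap.comp_apply, AlgHom.toLinearMap_apply, LinearMap.mulRight_apply, map_mul, hφ,
      map_zero] at this
    exact (mul_eq_zero.mp this).resolve_right hμ
  have := (Polynomial.basisMonomials K).linearIndependent.map' f hf
  simpa [f, Function.comp_def] using this

end PowMul

section Blocks

variable {R M N η κ : Type*} [Semiring R] [AddCommMonoid M] [Module R M]
  [AddCommMonoid N] [Module R N]

theorem linearIndependent_of_blockDiagonal (v : η × κ → M) (π : η → M →ₗ[R] N)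
    (h_off : ∀ c c' k, c' ≠ c → π c (v (c', k)) = 0)
    (h_on : ∀ c, LinearIndependent R (fun k => π c (v (c, k)))) :
    LinearIndependent R v := by
  classical
  refine .of_comp (LinearMap.pi π) ?_
  rw [← linearIndependent_equiv (Equiv.sigmaEquivProd η κ)]
  convert Pi.linearIndependent_single _ h_on with ⟨c, k⟩
  ext c'
  by_cases h : c' = c
  · subst h; simp
  · simp [h, h_off c' c k (Ne.symm h)]

end Blocks

noncomputable section Curve

variable {n : ℕ} (r : Fin n → ℂ)

def curvePoint (μ : ℂ) (i : Fin n) : ℂ := (μ - r i) ^ (2⁻¹ : ℂ)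

lemma curvePoint_sq (μ : ℂ) (i : Fin n) : curvePoint r μ i ^ 2 = μ - r i :=
  Complex.cpow_ofNat_inv_pow _ 2

def evalCurvePoint (μ : ℂ) : LLQ n r →ₐ[ℂ] ℂ :=
  Ideal.Quotient.liftₐ _ (aeval (curvePoint r μ)) fun p hp => by
    refine (Ideal.span_le (I := RingHom.ker (aeval (curvePoint r μ)))).mpr ?_ hp
    rintro _ ⟨i, j, rfl⟩
    simp [curvePoint_sq]

@[simp] lemma evalCurvePoint_lamQ (μ : ℂ) (i : Fin n) :
    evalCurvePoint r μ (lamQ n r i) = curvePoint r μ i :=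
  aeval_X _ i

@[simp] lemma evalCurvePoint_lambar [NeZero n] (μ : ℂ) : evalCurvePoint r μ (lambar n r) = μ := by
  simp [lambar, curvePoint_sq]

lemma finite_setOf_evalCurvePoint_lamQ_eq_zero (i : Fin n) :
    {μ | evalCurvePoint r μ (lamQ n r i) = 0}.Finite := by
  refine (Set.finite_singleton (r i)).subset fun μ hμ => ?_
  have hμ : curvePoint r μ i = 0 := by simpa using hμ
  rw [Set.mem_singleton_iff, ← sub_eq_zero, ← curvePoint_sq, hμ, zero_pow two_ne_zero]

end Curve

section Slots

variable (n : ℕ) (r : Fin n → ℂ)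

/-- The matrix entry carrying a family of generators: `inl l` stands for the odd generators in
entry `(l, n+1)`, `inr (i, j)` for the even generators in entry `(i, j)`, `i < j`. -/
abbrev Slot : Type := Fin n ⊕ {p : Fin n × Fin n // p.1 < p.2}

variable {n}

def Slot.row : Slot n → Fin (n + 1)
  | .inl l => l.castSucc
  | .inr p => p.1.1.castSucc

def Slot.col : Slot n → Fin (n + 1)
  | .inl _ => Fin.last n
  | .inr p => p.1.2.castSucc

noncomputable def slotCoeff : Slot n → LLQ n r
  | .inl l => lamQ n r l
  | .inr p => lamQ n r p.1.1 * lamQ n r p.1.2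

lemma finite_setOf_evalCurvePoint_slotCoeff_eq_zero (c : Slot n) :
    {μ | evalCurvePoint r μ (slotCoeff r c) = 0}.Finite := by
  rcases c with l | ⟨⟨i, j⟩, _⟩
  · exact finite_setOf_evalCurvePoint_lamQ_eq_zero r l
  · simpa [slotCoeff, Set.ofPred_or] using (finite_setOf_evalCurvePoint_lamQ_eq_zero r i).union
      (finite_setOf_evalCurvePoint_lamQ_eq_zero r j)

end Slots

section Generators

variable {n : ℕ} [NeZero n] (r : Fin n → ℂ)

noncomputable def generator : Slot n → ℕ → LLM n r
  | .inl l, k => Qodd n r k l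
  | .inr p, k => Qeven n r k p.1.1 p.1.2

lemma generator_apply_slot (c c' : Slot n) (k : ℕ) :
    generator r c' k c.row c.col = if c' = c then lambar n r ^ (k - 1) * slotCoeff r c else 0 := by
  rcases c with l | ⟨⟨i, j⟩, hij⟩ <;> rcases c' with l' | ⟨⟨i', j'⟩, hij'⟩ <;>
    simp only [generator, Qodd, Qeven, slotCoeff, Slot.row, Slot.col, Matrix.smul_apply,
      Matrix.add_apply, Matrix.sub_apply, single_apply, Fin.castSucc_inj, Fin.castSucc_ne_last,
      (Fin.castSucc_ne_last _).symm, Sum.inl.injEq, Sum.inr.injEq, Subtype.mk.injEq, Prod.mk.injEq,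
      reduceCtorEq, and_true, and_false, false_and, if_false, add_zero, sub_self, smul_eq_mul,
      mul_ite, mul_one, mul_zero]
  · split_ifs with h <;> simp [h]
  · have : ¬(j' = i ∧ i' = j) := fun h => (hij.trans (h.2 ▸ h.1 ▸ hij')).false
    split_ifs with h <;> simp_all [mul_assoc]

theorem linearIndependent_generator :
    LinearIndependent ℂ (fun x : Slot n × {k : ℕ // 1 ≤ k} => generator r x.1 x.2) := by
  refine linearIndependent_of_blockDiagonal _ (fun c => entryLinearMap ℂ (LLQ n r) c.row c.col)
    (fun c c' k hc => by simp [generator_apply_slot, hc]) fun c => ?_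
  have hpred : Function.Injective fun k : {k : ℕ // 1 ≤ k} => k.1 - 1 := fun k k' h => by
    have := k.2; have := k'.2; simp only at h; ext; omega
  simp only [entryLinearMap_apply, generator_apply_slot, if_pos]
  exact (linearIndependent_pow_mul_of_eval _ _ (evalCurvePoint r) (evalCurvePoint_lambar r)
    (finite_setOf_evalCurvePoint_slotCoeff_eq_zero r c)).comp _ hpred

end Generators

theorem stmt_7 (n : ℕ) [NeZero n] (r : Fin n → ℂ) :
    LinearIndependent ℂ
      (fun x : (Fin n × {k : ℕ // 1 ≤ k}) ⊕
               ({p : Fin n × Fin n // p.1 < p.2} × {k : ℕ // 1 ≤ k}) =>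
        match x with
        | Sum.inl (l, k) => Qodd n r k.1 l
        | Sum.inr (p, k) => Qeven n r k.1 p.1.1 p.1.2) := by
  convert (linearIndependent_generator r).comp _ (Equiv.sumProdDistrib _ _ _).symm.injective with x
  rcases x with (⟨l, k⟩ | ⟨p, k⟩) <;> rfl
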